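/- arXiv:0804.1254 — 3 statements merged into one kernel-verified Lean document; each statement's English description precedes it below -/
import Mathlib

section
/- Every word u over a linearly ordered alphabet has a unique decomposition u = u₁u₂⋯u_k where each u_i is an associative Lyndon-Shirshov word and u₁ ≤ u₂ ≤ ⋯ ≤ u_k in the lexicographic order. -/
/-!
Existence: prepend the letters of `u` one at a time to a factorization of the rest. A new
head `w` that is not `≤` the next factor `v` is merged into `w ++ v`, which is again an
ALSW because `v < w` (the merging lemma); repeat until the chain condition holds.

Uniqueness: the first factor `a` of a factorization is the longest ALSW prefix of the word.
If an ALSW prefix `p = a ++ c` with `c ≠ []` were longer, `c` would run through some of the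
next factors and end with a nonempty prefix `c'` of a factor `d ≥ a`, so `p < a ≤ d ≤ c'`.
But `c'` is a proper suffix of `p`, and a proper suffix of an ALSW is smaller than it.
-/

open List

/-- The lexicographic order used by Shirshov: a word is *greater* than any of its
proper extensions (`w > w ++ t` for `t ≠ []`), and otherwise words are compared
letterwise by the order on the alphabet.  `LSLt u v` means `u < v`. -/
def LSLt {X : Type*} [LinearOrder X] : List X → List X → Prop
  | _ :: _, [] => True
  | [], _ => False
  | a :: u, b :: v => a < b ∨ (a = b ∧ LSLt u v)

/-- `u ≤ v` in the Shirshov lexicographic order. -/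
def LSLe {X : Type*} [LinearOrder X] (u v : List X) : Prop := u = v ∨ LSLt u v

/-- The degree-lexicographic order: compare first by length, then lexicographically. -/
def DegLt {X : Type*} [LinearOrder X] (u v : List X) : Prop :=
  u.length < v.length ∨ (u.length = v.length ∧ LSLt u v)

/-- `≤` in the degree-lexicographic order. -/
def DegLe {X : Type*} [LinearOrder X] (u v : List X) : Prop := u = v ∨ DegLt u v

/-- An associative Lyndon–Shirshov word: a nonempty word `u` such that `vw > wv`
(lexicographically) for every factorization `u = vw` into nonempty parts. -/
def IsALSW {X : Type*} [LinearOrder X] (u : List X) : Prop :=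
  u ≠ [] ∧ ∀ v w : List X, v ≠ [] → w ≠ [] → u = v ++ w → LSLt (w ++ v) (v ++ w)

/-- `LSLt` without its prefix clause: the comparison is decided at a letter present in both
words, so it survives appending arbitrary words to both sides. -/
def LetterLt {X : Type*} [LinearOrder X] : List X → List X → Prop
  | a :: u, b :: v => a < b ∨ (a = b ∧ LetterLt u v)
  | _, _ => False

def IsLSFactorization {X : Type*} [LinearOrder X] (u : List X) (l : List (List X)) : Prop :=
  u = l.flatten ∧ (∀ w ∈ l, IsALSW w) ∧ l.IsChain LSLe

section

variable {X : Type*} [LinearOrder X]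

theorem LSLt.irrefl : ∀ u : List X, ¬ LSLt u u
  | [] => by simp [LSLt]
  | a :: u => by simp [LSLt, LSLt.irrefl u]

theorem LSLt.trans : ∀ {u v w : List X}, LSLt u v → LSLt v w → LSLt u w
  | [], v, _, h, _ => by cases v <;> simp [LSLt] at h
  | _ :: _, [], w, _, h => by cases w <;> simp [LSLt] at h
  | _ :: _, _ :: _, [], _, _ => trivial
  | a :: u, b :: v, c :: w, h₁, h₂ => by
    rcases h₁ with hab | ⟨rfl, h₁⟩ <;> rcases h₂ with hbc | ⟨rfl, h₂⟩
    · exact Or.inl (hab.trans hbc)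
    · exact Or.inl hab
    · exact Or.inl hbc
    · exact Or.inr ⟨rfl, h₁.trans h₂⟩

theorem LSLt.trans_le {u v w : List X} (h₁ : LSLt u v) (h₂ : LSLe v w) : LSLt u w := by
  rcases h₂ with rfl | h₂
  exacts [h₁, h₁.trans h₂]

theorem LSLe.trans_lt {u v w : List X} (h₁ : LSLe u v) (h₂ : LSLt v w) : LSLt u w := by
  rcases h₁ with rfl | h₁
  exacts [h₂, h₁.trans h₂]

theorem LSLe.trans {u v w : List X} (h₁ : LSLe u v) (h₂ : LSLe v w) : LSLe u w := by
  rcases h₁ with rfl | h₁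
  exacts [h₂, Or.inr (h₁.trans_le h₂)]

instance : @Trans (List X) (List X) (List X) LSLe LSLe LSLe := ⟨LSLe.trans⟩

theorem lslt_trichotomy : ∀ u v : List X, u = v ∨ LSLt u v ∨ LSLt v u
  | [], [] => Or.inl rfl
  | [], _ :: _ => Or.inr (Or.inr trivial)
  | _ :: _, [] => Or.inr (Or.inl trivial)
  | a :: u, b :: v => by
    rcases lt_trichotomy a b with hab | rfl | hba
    · exact Or.inr (Or.inl (Or.inl hab))
    · rcases lslt_trichotomy u v with rfl | h | h
      · exact Or.inl rfl
      · exact Or.inr (Or.inl (Or.inr ⟨rfl, h⟩))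
      · exact Or.inr (Or.inr (Or.inr ⟨rfl, h⟩))
    · exact Or.inr (Or.inr (Or.inl hba))

theorem lslt_of_not_lsle {u v : List X} (h : ¬ LSLe u v) : LSLt v u := by
  rcases lslt_trichotomy u v with rfl | h' | h'
  exacts [absurd (Or.inl rfl) h, absurd (Or.inr h') h, h']

theorem lslt_append_right : ∀ (u : List X) {t : List X}, t ≠ [] → LSLt (u ++ t) u
  | [], [], ht => absurd rfl ht
  | [], _ :: _, _ => trivial
  | _ :: u, _, ht => Or.inr ⟨rfl, lslt_append_right u ht⟩

theorem lsle_of_isPrefix {c d : List X} (h : c <+: d) : LSLe d c := by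
  obtain ⟨t, rfl⟩ := h
  rcases eq_or_ne t [] with rfl | ht
  exacts [Or.inl (append_nil c), Or.inr (lslt_append_right c ht)]

theorem lslt_append_left_iff : ∀ (p : List X) {x y : List X},
    LSLt (p ++ x) (p ++ y) ↔ LSLt x y
  | [], _, _ => Iff.rfl
  | _ :: p, _, _ => by simpa [LSLt] using lslt_append_left_iff p

namespace LetterLt

theorem lslt : ∀ {u v : List X}, LetterLt u v → LSLt u v
  | _ :: _, _ :: _, Or.inl h => Or.inl h
  | _ :: _, _ :: _, Or.inr ⟨h, h'⟩ => Or.inr ⟨h, lslt h'⟩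

theorem append : ∀ {u v : List X} (s t : List X), LetterLt u v → LetterLt (u ++ s) (v ++ t)
  | _ :: _, _ :: _, _, _, Or.inl h => Or.inl h
  | _ :: _, _ :: _, s, t, Or.inr ⟨h, h'⟩ => Or.inr ⟨h, append s t h'⟩

theorem append_left_cases : ∀ {w v z : List X}, LetterLt (w ++ v) z →
    LetterLt w z ∨ ∃ z', z = w ++ z' ∧ LetterLt v z'
  | [], _, z, h => Or.inr ⟨z, rfl, h⟩
  | _ :: _, _, _ :: _, Or.inl h => Or.inl (Or.inl h)
  | a :: _, _, _ :: _, Or.inr ⟨rfl, h⟩ => by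
    rcases append_left_cases h with h' | ⟨z', rfl, hz'⟩
    exacts [Or.inl (Or.inr ⟨rfl, h'⟩), Or.inr ⟨z', rfl, hz'⟩]

end LetterLt

theorem LSLt.letterLt_or_eq_append : ∀ {u v : List X}, LSLt u v →
    LetterLt u v ∨ ∃ t, t ≠ [] ∧ u = v ++ t
  | a :: u, [], _ => Or.inr ⟨a :: u, cons_ne_nil a u, rfl⟩
  | _ :: _, _ :: _, Or.inl h => Or.inl (Or.inl h)
  | _ :: _, _ :: _, Or.inr ⟨rfl, h⟩ => by
    rcases h.letterLt_or_eq_append with h' | ⟨t, ht, rfl⟩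
    exacts [Or.inl (Or.inr ⟨rfl, h'⟩), Or.inr ⟨t, ht, rfl⟩]

theorem LSLt.letterLt_of_length_le {u v : List X} (h : LSLt u v)
    (hl : u.length ≤ v.length) : LetterLt u v := by
  rcases h.letterLt_or_eq_append with h' | ⟨t, ht, rfl⟩
  · exact h'
  · exact absurd (by simpa using hl) ht

theorem LSLt.append_of_length_le {u v : List X} (h : LSLt u v) (hl : u.length ≤ v.length)
    (s t : List X) : LSLt (u ++ s) (v ++ t) :=
  ((h.letterLt_of_length_le hl).append s t).lslt

namespace IsALSW

theorem lslt_of_eq_append {u v w : List X} (hu : IsALSW u) (huv : u = v ++ w)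
    (hv : v ≠ []) (hw : w ≠ []) : LSLt w u := by
  have hrot : LetterLt (w ++ v) (v ++ w) :=
    (hu.2 v w hv hw huv).letterLt_of_length_le (by simp [Nat.add_comm])
  rcases hrot.append_left_cases with h | ⟨z, hz, hvz⟩
  · exact huv ▸ h.lslt
  · -- Then `u = w ++ z` and `u = v ++ w < z ++ w`, a rotation of `u` that should be smaller.
    have hz_ne : z ≠ [] := by
      rintro rfl
      have := congrArg length hz
      exact hv (by simpa using this)
    have h₁ : LSLt (z ++ w) u := by rw [huv, hz]; exact hu.2 w z hw hz_ne (huv.trans hz)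
    have h₂ : LSLt u (z ++ w) := by rw [huv]; exact (hvz.append w w).lslt
    exact absurd (h₁.trans h₂) (LSLt.irrefl _)

theorem lsle_of_eq_append {u v w : List X} (hu : IsALSW u) (huv : u = v ++ w)
    (hw : w ≠ []) : LSLe w u := by
  rcases eq_or_ne v [] with rfl | hv
  exacts [Or.inl huv.symm, Or.inr (hu.lslt_of_eq_append huv hv hw)]

theorem of_forall_lslt_suffix {u : List X} (hu : u ≠ [])
    (h : ∀ v w, v ≠ [] → w ≠ [] → u = v ++ w → LSLt w u) : IsALSW u := by
  refine ⟨hu, fun v w hv hw huv => ?_⟩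
  have hl : w.length ≤ u.length := by simp [huv]
  simpa [← huv] using (h v w hv hw huv).append_of_length_le hl v []

theorem lslt_append {a b : List X} (ha : IsALSW a) (hb : IsALSW b) (hba : LSLt b a) :
    LSLt b (a ++ b) := by
  rcases hba.letterLt_or_eq_append with h | ⟨t, ht, rfl⟩
  · simpa using (h.append [] b).lslt
  · rw [lslt_append_left_iff]
    exact hb.lslt_of_eq_append rfl ha.1 ht

theorem append {a b : List X} (ha : IsALSW a) (hb : IsALSW b) (hba : LSLt b a) :
    IsALSW (a ++ b) := by
  refine of_forall_lslt_suffix (by simp [ha.1]) fun v w hv hw hvw => ?_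
  rcases append_eq_append_iff.mp hvw with ⟨s, -, hb_eq⟩ | ⟨s, ha_eq, rfl⟩
  · exact (hb.lsle_of_eq_append hb_eq hw).trans_lt (ha.lslt_append hb hba)
  · rcases eq_or_ne s [] with rfl | hs
    · exact ha.lslt_append hb hba
    · have hl : s.length ≤ a.length := by simp [ha_eq]
      exact (ha.lslt_of_eq_append ha_eq hv hs).append_of_length_le hl b b

theorem singleton (x : X) : IsALSW [x] := by
  refine ⟨cons_ne_nil x [], fun v w hv hw hvw => absurd (congrArg length hvw) ?_⟩
  have := length_pos_iff.mpr hv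
  have := length_pos_iff.mpr hw
  simp only [length_singleton, length_append]
  omega

theorem not_isPrefix_flatten {p q c : List X} (hp : IsALSW p) (hpc : p = q ++ c)
    (hq : q ≠ []) (hc : c ≠ []) {ms : List (List X)} (hms : ∀ m ∈ ms, LSLt p m) :
    ¬ c <+: ms.flatten := by
  induction ms generalizing q c with
  | nil => simpa using hc
  | cons d ms ih =>
    intro hpre
    by_cases hcd : c <+: d
    · exact LSLt.irrefl p
        (((hms d (mem_cons_self ..)).trans_le (lsle_of_isPrefix hcd)).trans
          (hp.lslt_of_eq_append hpc hq hc))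
    obtain ⟨c', rfl⟩ := (prefix_or_prefix_of_prefix (prefix_append d _) hpre).resolve_right hcd
    have hc' : c' ≠ [] := by rintro rfl; exact hcd (by simp)
    refine ih (q := q ++ d) (by simp [hpc]) (by simp [hq]) hc'
      (fun m hm => hms m (mem_cons_of_mem d hm)) ?_
    rwa [flatten_cons, prefix_append_right_inj] at hpre

theorem isPrefix_of_isPrefix_flatten_cons {p a : List X} {l : List (List X)} (hp : IsALSW p)
    (ha : a ≠ []) (hl : (a :: l).IsChain LSLe) (hpre : p <+: (a :: l).flatten) : p <+: a := by
  rw [flatten_cons] at hpre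
  rcases prefix_or_prefix_of_prefix hpre (prefix_append a _) with hpa | ⟨c, rfl⟩
  · exact hpa
  rcases eq_or_ne c [] with rfl | hc
  · simp
  have hms : ∀ m ∈ l, LSLt (a ++ c) m := fun m hm =>
    (lslt_append_right a hc).trans_le (rel_of_pairwise_cons hl.pairwise hm)
  exact absurd ((prefix_append_right_inj a).mp hpre) (hp.not_isPrefix_flatten rfl ha hc hms)

end IsALSW

namespace IsLSFactorization

theorem nil : IsLSFactorization ([] : List X) [] := ⟨rfl, by simp, isChain_nil⟩

theorem exists_append {u w : List X} {l : List (List X)} (hl : IsLSFactorization u l)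
    (hw : IsALSW w) : ∃ m, IsLSFactorization (w ++ u) m := by
  obtain ⟨rfl, hl, hchain⟩ := hl
  induction l generalizing w with
  | nil => exact ⟨[w], by simp, by simpa using hw, isChain_singleton w⟩
  | cons v l ih =>
    have hv : IsALSW v := hl v (mem_cons_self ..)
    by_cases hwv : LSLe w v
    · exact ⟨w :: v :: l, rfl, forall_mem_cons.mpr ⟨hw, hl⟩,
        isChain_cons_cons.mpr ⟨hwv, hchain⟩⟩
    obtain ⟨m, hm⟩ := ih (hw.append hv (lslt_of_not_lsle hwv))
      (fun x hx => hl x (mem_cons_of_mem v hx)) hchain.tail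
    exact ⟨m, by simpa using hm⟩

theorem unique {u : List X} {l m : List (List X)} (hl : IsLSFactorization u l)
    (hm : IsLSFactorization u m) : l = m := by
  obtain ⟨rfl, hl, hlc⟩ := hl
  obtain ⟨hlm, hm, hmc⟩ := hm
  induction l generalizing m with
  | nil => cases m with
    | nil => rfl
    | cons b m => simp [(hm b (mem_cons_self ..)).1] at hlm
  | cons a l ih => cases m with
    | nil => simp [(hl a (mem_cons_self ..)).1] at hlm
    | cons b m =>
      have ha := hl a (mem_cons_self ..)
      have hb := hm b (mem_cons_self ..)
      have hab : a <+: b :=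
        ha.isPrefix_of_isPrefix_flatten_cons hb.1 hmc (hlm ▸ prefix_append a _)
      have hba : b <+: a :=
        hb.isPrefix_of_isPrefix_flatten_cons ha.1 hlc (hlm ▸ prefix_append b _)
      obtain rfl := hab.eq_of_length (le_antisymm hab.length_le hba.length_le)
      rw [ih (fun w hw => hl w (mem_cons_of_mem a hw)) hlc.tail (by simpa using hlm)
        (fun w hw => hm w (mem_cons_of_mem a hw)) hmc.tail]

end IsLSFactorization

theorem exists_isLSFactorization : ∀ u : List X, ∃ l, IsLSFactorization u l
  | [] => ⟨[], IsLSFactorization.nil⟩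
  | x :: u => by
    obtain ⟨l, hl⟩ := exists_isLSFactorization u
    exact hl.exists_append (IsALSW.singleton x)

end

/-- Chen–Fox–Lyndon / Lyndon–Shirshov factorization.
Every word `u` has a unique decomposition `u = u₁u₂⋯u_k` where each `uᵢ` is an
ALSW and `u₁ ≤ u₂ ≤ ⋯ ≤ u_k` lexicographically. -/
theorem lyndon_shirshov_factorization {X : Type*} [LinearOrder X] (u : List X) :
    ∃! l : List (List X),
      u = l.flatten ∧ (∀ w ∈ l, IsALSW w) ∧ l.Chain' LSLe := by
  obtain ⟨l, hl⟩ := exists_isLSFactorization u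
  exact ⟨l, hl, fun m hm => IsLSFactorization.unique hm hl⟩
end

section
/- If ac and cb are associative Lyndon-Shirshov words, where a, b, c are words and c is nonempty, then the word acb is also an associative Lyndon-Shirshov word. -/
open List

section Aux
variable {X : Type*} [LinearOrder X]

theorem lslt_trans : ∀ (u v w : List X), LSLt u v → LSLt v w → LSLt u w := by
  intro u
  induction u with
  | nil => intro v w h1 _; exact absurd h1 (by cases v <;> exact fun h => h)
  | cons a u ih =>
    intro v w h1 h2
    cases v with
    | nil => exact absurd h2 (by cases w <;> exact fun h => h)
    | cons b v =>
      cases w with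
      | nil => trivial
      | cons c w =>
        rcases h1 with h1 | ⟨rfl, h1⟩ <;> rcases h2 with h2 | ⟨rfl, h2⟩
        · exact Or.inl (h1.trans h2)
        · exact Or.inl h1
        · exact Or.inl h2
        · exact Or.inr ⟨rfl, ih v w h1 h2⟩

theorem lslt_irrefl : ∀ (u : List X), ¬ LSLt u u := by
  intro u
  induction u with
  | nil => exact fun h => h
  | cons a u ih =>
    rintro (h | ⟨-, h⟩)
    · exact absurd h (lt_irrefl a)
    · exact ih h

theorem lslt_cancel_left : ∀ (s t u : List X), LSLt (s ++ t) (s ++ u) → LSLt t u := by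
  intro s
  induction s with
  | nil => exact fun t u h => h
  | cons a s ih =>
    rintro t u (h | ⟨-, h⟩)
    · exact absurd h (lt_irrefl a)
    · exact ih t u h

/-- If `v < u` with `v` no longer than `u`, the comparison is decided by a letter,
so any extensions still compare the same way. -/
theorem lslt_ext : ∀ (v u x y : List X), LSLt v u → v.length ≤ u.length →
    LSLt (v ++ x) (u ++ y) := by
  intro v
  induction v with
  | nil => intro u x y h _; exact absurd h (by cases u <;> exact fun h => h)
  | cons a v ih =>
    intro u x y h hl
    cases u with
    | nil => simp at hl
    | cons b u =>
      rcases h with h | ⟨rfl, h⟩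
      · exact Or.inl h
      · exact Or.inr ⟨rfl, ih u x y h (by simpa using hl)⟩

theorem lslt_of_append : ∀ (r t x y : List X), r.length = t.length →
    LSLt (r ++ x) (t ++ y) → r = t ∨ LSLt r t := by
  intro r
  induction r with
  | nil => intro t x y hl _; exact Or.inl (by simpa using (List.length_eq_zero_iff.mp hl.symm).symm)
  | cons a r ih =>
    intro t x y hl h
    cases t with
    | nil => simp at hl
    | cons b t =>
      rcases h with h | ⟨rfl, h⟩
      · exact Or.inr (Or.inl h)
      · rcases ih t x y (by simpa using hl) h with rfl | h'
        · exact Or.inl rfl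
        · exact Or.inr (Or.inr ⟨rfl, h'⟩)

/-- If `s ++ x < u` with `s` no longer than `u`, then either `s < u` or `s` is a
prefix of `u`. -/
theorem lslt_drop : ∀ (s u x : List X), s.length ≤ u.length → LSLt (s ++ x) u →
    LSLt s u ∨ s <+: u := by
  intro s
  induction s with
  | nil => intro u x _ _; exact Or.inr (nil_prefix)
  | cons a s ih =>
    intro u x hl h
    cases u with
    | nil => simp at hl
    | cons b u =>
      rcases h with h | ⟨rfl, h⟩
      · exact Or.inl (Or.inl h)
      · rcases ih u x (by simpa using hl) h with h' | h'
        · exact Or.inl (Or.inr ⟨rfl, h'⟩)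
        · exact Or.inr (List.cons_prefix_cons.mpr ⟨rfl, h'⟩)

/-- Proper nonempty suffixes of an ALSW are smaller than it. -/
theorem alsw_suffix {u t s : List X} (h : IsALSW u) (ht : t ≠ []) (hs : s ≠ [])
    (heq : u = t ++ s) : LSLt s u := by
  have h1 : LSLt (s ++ t) u := heq ▸ h.2 t s ht hs heq
  have hl : s.length ≤ u.length := by
    subst heq; simp
  rcases lslt_drop s u t hl h1 with h2 | ⟨r, hr⟩
  · exact h2
  · exfalso
    have hrne : r ≠ [] := by
      rintro rfl
      rw [append_nil] at hr
      subst hr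
      cases t with
      | nil => exact ht rfl
      | cons x t' =>
        have := congrArg List.length heq; simp at this; omega
    have h3 : LSLt (r ++ s) u := hr ▸ h.2 s r hs hrne hr.symm
    -- u = t ++ s = s ++ r
    have hts : t ++ s = s ++ r := by rw [← heq, hr]
    have hlen : r.length = t.length := by
      have := congrArg List.length hts; simp at this; omega
    -- from s++t < u = s++r : t < r
    have h4 : LSLt t r := lslt_cancel_left s t r (by rw [hr]; exact h1)
    -- from r++s < u = t++s : r = t or r < t
    rcases lslt_of_append r t s s hlen (by rw [← heq]; exact h3) with rfl | h5
    · exact lslt_irrefl _ h4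
    · exact lslt_irrefl _ (lslt_trans _ _ _ h4 h5)

end Aux

/-- If `ac` and `cb` are ALSWs with `c` nonempty, then `acb`
is an ALSW. -/
theorem alsw_glue {X : Type*} [LinearOrder X]
    (a b c : List X) (hc : c ≠ [])
    (hac : IsALSW (a ++ c)) (hcb : IsALSW (c ++ b)) :
    IsALSW (a ++ c ++ b) := by
  rcases eq_or_ne a [] with rfl | ha
  · simpa using hcb
  rcases eq_or_ne b [] with rfl | hb
  · simpa using hac
  refine ⟨by simp [ha], ?_⟩
  intro v w hv hw heq
  have hcb_lt : LSLt (c ++ b) (a ++ c ++ b) := by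
    have h1 : LSLt c (a ++ c) := alsw_suffix hac ha hc rfl
    exact lslt_ext c (a ++ c) b b h1 (by simp)
  have key : LSLt w (a ++ c ++ b) := by
    rcases le_or_gt v.length a.length with hle | hlt
    · have hva : v <+: a :=
        List.prefix_of_prefix_length_le ⟨w, heq.symm⟩ ⟨c ++ b, by simp⟩ hle
      obtain ⟨a₂, ha₂⟩ := hva
      have hw' : w = (a₂ ++ c) ++ b := by
        apply List.append_cancel_left (as := v)
        rw [← heq, ← ha₂]
        simp
      rcases eq_or_ne a₂ [] with rfl | ha₂ne
      · rw [hw']; simpa using hcb_lt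
      · have h1 : LSLt (a₂ ++ c) (a ++ c) :=
          alsw_suffix hac hv (by simp [ha₂ne]) (by rw [← ha₂, List.append_assoc])
        have h2 : LSLt ((a₂ ++ c) ++ b) ((a ++ c) ++ b) :=
          lslt_ext _ _ b b h1 (by simp [← ha₂])
        rw [hw']; exact h2
    · have hav : a <+: v :=
        List.prefix_of_prefix_length_le ⟨c ++ b, by simp⟩ ⟨w, heq.symm⟩ hlt.le
      obtain ⟨c₁, hc₁⟩ := hav
      have hsplit : c ++ b = c₁ ++ w := by
        apply List.append_cancel_left (as := a)
        rw [← List.append_assoc, heq, ← hc₁, List.append_assoc]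
      have hc₁ne : c₁ ≠ [] := by
        rintro rfl
        rw [List.append_nil] at hc₁
        rw [hc₁] at hlt
        exact lt_irrefl _ hlt
      have h1 : LSLt w (c ++ b) := alsw_suffix hcb hc₁ne hw hsplit
      exact lslt_trans _ _ _ h1 hcb_lt
  have key2 : LSLt w (v ++ w) := heq ▸ key
  have h3 := lslt_ext w (v ++ w) v [] key2 (by simp)
  simpa using h3
end

section
/- The non-associative Lyndon-Shirshov words [u], as elements of the free associative algebra k⟨X⟩ under the commutator bracket, are linearly independent over the field k. -/
open List

/-- The underlying associative word of a non-associative word (binary bracketing). -/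
def wordOf {X : Type*} : FreeMagma X → List X
  | .of x => [x]
  | .mul a b => wordOf a ++ wordOf b

/-- `w` is the longest proper suffix of `u` which is an ALSW. -/
def LongestALSWProperSuffix {X : Type*} [LinearOrder X] (u w : List X) : Prop :=
  IsALSW w ∧ (∃ v : List X, v ≠ [] ∧ u = v ++ w) ∧
    ∀ w' : List X, IsALSW w' → (∃ v' : List X, v' ≠ [] ∧ u = v' ++ w') →
      w'.length ≤ w.length

/-- The standard (up-to-down) bracketing of an ALSW: `[x] = x` and
`[u] = [[v][w]]` where `w` is the longest proper ALSW suffix of `u`. -/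
inductive IsStdBracketing {X : Type*} [LinearOrder X] : List X → FreeMagma X → Prop
  | of (x : X) : IsStdBracketing [x] (.of x)
  | mul {v w : List X} {tv tw : FreeMagma X} :
      IsALSW (v ++ w) → LongestALSWProperSuffix (v ++ w) w →
      IsStdBracketing v tv → IsStdBracketing w tw →
      IsStdBracketing (v ++ w) (tv * tw)

/-- A non-associative Lyndon–Shirshov word, via Shirshov's conditions:
the underlying word is an ALSW, both halves are NLSWs, and the right factor of
the left half is `≤` the right half. -/
inductive IsNLSW {X : Type*} [LinearOrder X] : FreeMagma X → Prop
  | of (x : X) : IsNLSW (.of x)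
  | mul {tv tw : FreeMagma X} :
      IsNLSW tv → IsNLSW tw → IsALSW (wordOf (tv * tw)) →
      (∀ t₁ t₂ : FreeMagma X, tv = t₁ * t₂ → LSLe (wordOf t₂) (wordOf tw)) →
      IsNLSW (tv * tw)

/-- The free associative algebra `k⟨X⟩`, realized as the monoid algebra of the
free monoid on `X`. -/
abbrev FreeAssocAlg (k X : Type*) [Field k] := MonoidAlgebra k (FreeMonoid X)

/-- The monomial of `k⟨X⟩` corresponding to a word `u ∈ X*`. -/
noncomputable def monom (k : Type*) [Field k] {X : Type*} (u : List X) : FreeAssocAlg k X :=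
  MonoidAlgebra.single (FreeMonoid.ofList u) 1

/-- The coefficient of the word `u` in `f ∈ k⟨X⟩`. -/
def coeffW {k X : Type*} [Field k] (f : FreeAssocAlg k X) (u : List X) : k :=
  f.coeff (FreeMonoid.ofList u)

/-- `u` is the leading word of `f` with respect to the deg-lex order. -/
def IsLeadingWord {k X : Type*} [Field k] [LinearOrder X]
    (f : FreeAssocAlg k X) (u : List X) : Prop :=
  coeffW f u ≠ 0 ∧ ∀ w : List X, coeffW f w ≠ 0 → w = u ∨ DegLt w u

/-- `f` is monic: its leading coefficient is `1`. -/
def IsMonic {k X : Type*} [Field k] [LinearOrder X] (f : FreeAssocAlg k X) : Prop :=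
  ∃ u : List X, IsLeadingWord f u ∧ coeffW f u = 1

/-- The generator `x ∈ X` inside `k⟨X⟩`. -/
noncomputable def gen (k : Type*) [Field k] {X : Type*} (x : X) : FreeAssocAlg k X :=
  monom k [x]

attribute [local instance 100] LieRing.ofAssociativeRing

/-- The free Lie algebra `Lie(X)`: the Lie subalgebra of `k⟨X⟩` generated by `X`
under the commutator bracket. -/
noncomputable def LieX (k X : Type*) [Field k] : LieSubalgebra k (FreeAssocAlg k X) :=
  LieSubalgebra.lieSpan k _ (Set.range (gen k (X := X)))

/-- Evaluation of a non-associative word in `k⟨X⟩`, interpreting the binary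
operation as the commutator `(ab) = ab - ba`. -/
noncomputable def evalC {k X : Type*} [Field k] : FreeMagma X → FreeAssocAlg k X
  | .of x => gen k x
  | .mul a b => evalC a * evalC b - evalC b * evalC a

/-!
Induction along the standard bracketing shows that `[u]` is homogeneous of degree `|u|`, with
leading word `u` (lexicographically) and leading coefficient `1`: for `u = vw` the product
`[v][w]` has leading word `vw`, while every word of `[w][v]` is `≤ wv < vw` because `u` is an
associative Lyndon–Shirshov word. Since the standard bracketing of a word is unique, distinct
`[u]` have distinct leading words, so the family is triangular for the deg-lex order and hence
linearly independent.
-/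

theorem linearIndependent_of_triangular {R M ι β : Type*} [Ring R] [NoZeroDivisors R]
    [AddCommGroup M] [Module R M] [LinearOrder β] (v : ι → M) (c : ι → M →ₗ[R] R)
    (key : ι → β) (hkey : Function.Injective key) (hdiag : ∀ i, c i (v i) ≠ 0)
    (htri : ∀ i j, key i < key j → c j (v i) = 0) :
    LinearIndependent R v := by
  classical
  rw [linearIndependent_iff']
  intro s
  induction s using Finset.induction_on_max_value key with
  | empty => simp
  | insert a s has hmax ih =>
    intro g hsum
    have hlt : ∀ x ∈ s, key x < key a := fun x hx =>
      (hmax x hx).lt_of_ne (hkey.ne (ne_of_mem_of_not_mem hx has))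
    have hga : g a = 0 := by
      have := congrArg (c a) hsum
      rw [Finset.sum_insert has, map_add, map_sum, Finset.sum_eq_zero, add_zero,
        map_smul, smul_eq_mul, map_zero] at this
      · exact (mul_eq_zero.1 this).resolve_right (hdiag a)
      · intro x hx
        rw [map_smul, htri x a (hlt x hx), smul_zero]
    rw [Finset.sum_insert has, hga, zero_smul, zero_add] at hsum
    intro i hi
    rcases Finset.mem_insert.1 hi with rfl | hi
    exacts [hga, ih g hsum i hi]

namespace List

variable {X : Type*} [LinearOrder X]

theorem append_lt_append_of_length_eq {a c : List X} (b d : List X) (hlen : a.length = c.length)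
    (h : a < c) : a ++ b < c ++ d := by
  induction a generalizing c with
  | nil => cases c <;> simp_all
  | cons x a ih =>
    cases c with
    | nil => simp at hlen
    | cons y c =>
      cases h with
      | rel hxy => exact Lex.rel hxy
      | cons h => exact Lex.cons (ih (by simpa using hlen) h)

theorem append_le_append_of_length_eq {a b c d : List X} (hlen : a.length = c.length)
    (hac : a ≤ c) (hbd : b ≤ d) : a ++ b ≤ c ++ d := by
  rcases hac.lt_or_eq with hac | rfl
  · exact (append_lt_append_of_length_eq b d hlen hac).le
  · rcases hbd.lt_or_eq with hbd | rfl
    exacts [le_of_lt (Lex.append_left _ hbd a), le_rfl]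

end List

theorem LSLt.lt_of_length_eq {X : Type*} [LinearOrder X] {u v : List X}
    (hlen : u.length = v.length) (h : LSLt u v) : u < v := by
  induction u generalizing v with
  | nil => cases v <;> simp_all [LSLt]
  | cons a u ih =>
    cases v with
    | nil => simp at hlen
    | cons b v =>
      rcases h with hab | ⟨rfl, h⟩
      exacts [List.Lex.rel hab, List.Lex.cons (ih (by simpa using hlen) h)]

section Bracketing

variable {X : Type*} [LinearOrder X]

theorem LongestALSWProperSuffix.prefix_ne_nil {v w : List X}
    (h : LongestALSWProperSuffix (v ++ w) w) : v ≠ [] := by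
  obtain ⟨v', hv', he⟩ := h.2.1
  rwa [List.append_cancel_right he]

theorem LongestALSWProperSuffix.append_ne_singleton {v w : List X}
    (h : LongestALSWProperSuffix (v ++ w) w) (x : X) : v ++ w ≠ [x] := by
  simp [List.append_eq_singleton_iff, h.prefix_ne_nil, h.1.1]

theorem IsStdBracketing.unique {u : List X} {t t' : FreeMagma X}
    (h : IsStdBracketing u t) (h' : IsStdBracketing u t') : t = t' := by
  induction h generalizing t' with
  | of x =>
    generalize hu : [x] = u at h'
    cases h' with
    | of y => cases hu; rfl
    | mul _ hsuf => exact absurd hu.symm (hsuf.append_ne_singleton x)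
  | @mul v w tv tw _ hsuf _ _ ihv ihw =>
    generalize hu : v ++ w = u at h'
    cases h' with
    | of y => exact absurd hu (hsuf.append_ne_singleton y)
    | @mul v' w' _ _ _ hsuf' hv' hw' =>
      have hww' : w'.length ≤ w.length := hsuf.2.2 w' hsuf'.1 ⟨v', hsuf'.prefix_ne_nil, hu⟩
      have hw'w : w.length ≤ w'.length := hsuf'.2.2 w hsuf.1 ⟨v, hsuf.prefix_ne_nil, hu.symm⟩
      obtain ⟨rfl, rfl⟩ := List.append_inj' hu (by omega)
      rw [ihv hv', ihw hw']

end Bracketing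

section LeadingWord

variable {k X : Type*} [Field k]

theorem coeffW_mul_append {f g : FreeAssocAlg k X} {a : List X} (b : List X)
    (hf : ∀ m, coeffW f m ≠ 0 → m.length = a.length) :
    coeffW (f * g) (a ++ b) = coeffW f a * coeffW g b := by
  refine MonoidAlgebra.coeff_mul_mul_of_uniqueMul fun x y hx hy hxy => ?_
  have hxy : x.toList ++ y.toList = a ++ b := congrArg FreeMonoid.toList hxy
  obtain ⟨rfl, rfl⟩ := List.append_inj hxy (hf x.toList (Finsupp.mem_support_iff.1 hx))
  exact ⟨rfl, rfl⟩

theorem exists_append_of_coeffW_mul_ne_zero {f g : FreeAssocAlg k X} {m : List X}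
    (h : coeffW (f * g) m ≠ 0) :
    ∃ x y : List X, m = x ++ y ∧ coeffW f x ≠ 0 ∧ coeffW g y ≠ 0 := by
  classical
  obtain ⟨x, hx, y, hy, hxy⟩ :=
    Finset.mem_mul.1 (MonoidAlgebra.support_coeff_mul_subset f g (Finsupp.mem_support_iff.2 h))
  exact ⟨x.toList, y.toList, (congrArg FreeMonoid.toList hxy).symm,
    Finsupp.mem_support_iff.1 hx, Finsupp.mem_support_iff.1 hy⟩

variable [LinearOrder X]

/-- Homogeneity is built in because the lexicographic order is compatible with concatenation
only among words of equal length. -/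
def IsHomogeneousWithMonicLeadingWord (f : FreeAssocAlg k X) (u : List X) : Prop :=
  coeffW f u = 1 ∧ ∀ m : List X, coeffW f m ≠ 0 → m.length = u.length ∧ m ≤ u

namespace IsHomogeneousWithMonicLeadingWord

theorem monom (u : List X) : IsHomogeneousWithMonicLeadingWord (monom k u) u := by
  classical
  refine ⟨by simp [coeffW, _root_.monom], fun m hm => ?_⟩
  obtain rfl : u = m := by
    by_contra hne
    exact hm (by simp [coeffW, _root_.monom, hne])
  exact ⟨rfl, le_rfl⟩

theorem mul {f g : FreeAssocAlg k X} {u v : List X} (hf : IsHomogeneousWithMonicLeadingWord f u)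
    (hg : IsHomogeneousWithMonicLeadingWord g v) :
    IsHomogeneousWithMonicLeadingWord (f * g) (u ++ v) := by
  refine ⟨by rw [coeffW_mul_append v fun m hm => (hf.2 m hm).1, hf.1, hg.1, one_mul],
    fun m hm => ?_⟩
  obtain ⟨x, y, rfl, hx, hy⟩ := exists_append_of_coeffW_mul_ne_zero hm
  obtain ⟨hxlen, hxu⟩ := hf.2 x hx
  obtain ⟨hylen, hyv⟩ := hg.2 y hy
  exact ⟨by simp [hxlen, hylen], List.append_le_append_of_length_eq hxlen hxu hyv⟩

theorem sub_of_lt {f g : FreeAssocAlg k X} {u u' : List X}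
    (hf : IsHomogeneousWithMonicLeadingWord f u) (hg : IsHomogeneousWithMonicLeadingWord g u')
    (hlen : u'.length = u.length) (hlt : u' < u) :
    IsHomogeneousWithMonicLeadingWord (f - g) u := by
  have hsub : ∀ m, coeffW (f - g) m = coeffW f m - coeffW g m := fun m => by
    simp [coeffW, MonoidAlgebra.coeff_sub]
  have hgu : coeffW g u = 0 := by
    by_contra h
    exact (hg.2 u h).2.not_gt hlt
  refine ⟨by rw [hsub, hf.1, hgu, sub_zero], fun m hm => ?_⟩
  by_cases hfm : coeffW f m = 0
  · have hgm : coeffW g m ≠ 0 := by simpa [hsub, hfm] using hm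
    obtain ⟨hmlen, hmu'⟩ := hg.2 m hgm
    exact ⟨hmlen.trans hlen, hmu'.trans hlt.le⟩
  · exact hf.2 m hfm

end IsHomogeneousWithMonicLeadingWord

theorem IsStdBracketing.isHomogeneousWithMonicLeadingWord {u : List X} {t : FreeMagma X}
    (h : IsStdBracketing u t) : IsHomogeneousWithMonicLeadingWord (evalC (k := k) t) u := by
  induction h with
  | of x => exact .monom [x]
  | @mul v w tv tw hals hsuf _ _ ihv ihw =>
    have hwv : LSLt (w ++ v) (v ++ w) := hals.2 v w hsuf.prefix_ne_nil hsuf.1.1 rfl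
    have hlen : (w ++ v).length = (v ++ w).length := by simp [add_comm]
    exact (ihv.mul ihw).sub_of_lt (ihw.mul ihv) hlen (hwv.lt_of_length_eq hlen)

end LeadingWord

/-- The non-associative Lyndon–Shirshov words, as elements of
`k⟨X⟩` under the commutator bracket, are linearly independent over `k`. -/
theorem nlsw_linearIndependent {k X : Type*} [Field k] [LinearOrder X] :
    LinearIndependent k
      (fun t : {t : FreeMagma X // IsStdBracketing (wordOf t) t} =>
        evalC (k := k) t.val) := by
  have hlead (t : {t : FreeMagma X // IsStdBracketing (wordOf t) t}) :=
    t.2.isHomogeneousWithMonicLeadingWord (k := k)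
  refine linearIndependent_of_triangular _
    (fun t => Finsupp.lapply (FreeMonoid.ofList (wordOf t.val)) ∘ₗ
      (MonoidAlgebra.coeffLinearEquiv k).toLinearMap)
    (fun t => toLex ((wordOf t.val).length, wordOf t.val)) ?_ (fun t => ?_) (fun t t' hlt => ?_)
  · intro t t' h
    have hword : wordOf t.val = wordOf t'.val := congrArg Prod.snd (toLex.injective h)
    exact Subtype.ext (t.2.unique (hword ▸ t'.2))
  · change coeffW _ _ ≠ 0
    exact (hlead t).1 ▸ one_ne_zero
  · change coeffW _ _ = 0
    by_contra h
    obtain ⟨hlen, hle⟩ := (hlead t).2 _ h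
    exact hlt.not_ge (Prod.Lex.toLex_le_toLex.2 (Or.inr ⟨hlen, hle⟩))
end
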